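/- arXiv:2402.12994 — 5 statements merged into one kernel-verified Lean document; each statement's English description precedes it below -/
import Mathlib

section
/- Let V be a finite nonempty type, p : V → ℝ a probability mass function with full support (p(v) > 0 for all v and Σ_v p(v) = 1), g : V → ℝ, α > 0 and η ≥ 0. If q : V → ℝ is a probability mass function (q(v) ≥ 0, Σ_v q(v) = 1) with KL(q,p) = Σ_v q(v)·log(q(v)/p(v)) ≤ η, then Σ_v q(v)·g(v) ≤ α·η + α·log( Σ_v p(v)·exp(g(v)/α) ). -/
/-- Change-of-measure (weak duality) inequality for KL-ball DRO: if `q` is a pmf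
with `KL(q,p) ≤ η`, then `E_q[g] ≤ α·η + α·log E_p[exp(g/α)]`. -/
theorem kl_dro_weak_duality
    {V : Type*} [Fintype V] [Nonempty V]
    (p : V → ℝ) (hp_pos : ∀ v, 0 < p v) (hp_sum : ∑ v, p v = 1)
    (g : V → ℝ) (α : ℝ) (hα : 0 < α) (η : ℝ) (hη : 0 ≤ η)
    (q : V → ℝ) (hq_nonneg : ∀ v, 0 ≤ q v) (hq_sum : ∑ v, q v = 1)
    (hKL : ∑ v, q v * Real.log (q v / p v) ≤ η) :
    ∑ v, q v * g v ≤ α * η + α * Real.log (∑ v, p v * Real.exp (g v / α)) := by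
  set Z : ℝ := ∑ v, p v * Real.exp (g v / α) with hZdef
  have hZ : 0 < Z := by
    apply Finset.sum_pos
    · intro v _; exact mul_pos (hp_pos v) (Real.exp_pos _)
    · exact Finset.univ_nonempty
  have key : ∀ v, q v * (g v / α) - q v * Real.log (q v / p v) - q v * Real.log Z
      ≤ p v * Real.exp (g v / α) / Z - q v := by
    intro v
    rcases eq_or_lt_of_le (hq_nonneg v) with h0 | hq
    · rw [← h0]
      simpa using div_nonneg (le_of_lt (mul_pos (hp_pos v) (Real.exp_pos _))) hZ.le
    · set x : ℝ := p v * Real.exp (g v / α) / (q v * Z) with hx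
      have hxpos : 0 < x := by
        apply div_pos (mul_pos (hp_pos v) (Real.exp_pos _)) (mul_pos hq hZ)
      have hlog : Real.log x ≤ x - 1 := Real.log_le_sub_one_of_pos hxpos
      have hmul : q v * Real.log x ≤ q v * (x - 1) :=
        mul_le_mul_of_nonneg_left hlog (le_of_lt hq)
      have hexp : q v * (x - 1) = p v * Real.exp (g v / α) / Z - q v := by
        rw [hx]; field_simp
      have hlx : Real.log x = Real.log (p v) + g v / α - Real.log (q v) - Real.log Z := by
        rw [hx, Real.log_div (ne_of_gt (mul_pos (hp_pos v) (Real.exp_pos _)))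
          (ne_of_gt (mul_pos hq hZ)),
          Real.log_mul (ne_of_gt (hp_pos v)) (ne_of_gt (Real.exp_pos _)),
          Real.log_mul (ne_of_gt hq) (ne_of_gt hZ), Real.log_exp]
        ring
      have hql : q v * Real.log (q v / p v) = q v * (Real.log (q v) - Real.log (p v)) := by
        rw [Real.log_div (ne_of_gt hq) (ne_of_gt (hp_pos v))]
      calc q v * (g v / α) - q v * Real.log (q v / p v) - q v * Real.log Z
          = q v * Real.log x := by rw [hql, hlx]; ring
        _ ≤ q v * (x - 1) := hmul
        _ = _ := hexp
  have hsum : ∑ v, (q v * (g v / α) - q v * Real.log (q v / p v) - q v * Real.log Z)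
      ≤ ∑ v, (p v * Real.exp (g v / α) / Z - q v) :=
    Finset.sum_le_sum fun v _ => key v
  rw [Finset.sum_sub_distrib, Finset.sum_sub_distrib, Finset.sum_sub_distrib,
    ← Finset.sum_div, ← hZdef,
    div_self (ne_of_gt hZ), hq_sum] at hsum
  have h1 : ∑ v, q v * Real.log Z = Real.log Z := by
    rw [← Finset.sum_mul, hq_sum, one_mul]
  rw [h1] at hsum
  have h2 : ∑ v, q v * (g v / α) = (∑ v, q v * g v) / α := by
    rw [Finset.sum_div]; congr 1; ext v; ring
  have h3 : (∑ v, q v * g v) / α ≤ η + Real.log Z := by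
    have := hsum
    rw [h2] at this
    linarith
  calc ∑ v, q v * g v = α * ((∑ v, q v * g v) / α) := by field_simp
    _ ≤ α * (η + Real.log Z) := mul_le_mul_of_nonneg_left h3 (le_of_lt hα)
    _ = α * η + α * Real.log Z := by ring
end

section
/- Let V be a finite nonempty type, p : V → ℝ a probability mass function with full support, g : V → ℝ, α > 0, and let P*(v) = p(v)·exp(g(v)/α)/Σ_w p(w)·exp(g(w)/α) be the tilted distribution. Set η = KL(P*,p). Then E_{P*}[g] = Σ_v P*(v)·g(v) is the greatest element of the set { Σ_v q(v)·g(v) : q a probability mass function on V with KL(q,p) ≤ η }. That is, the worst-case distribution of the KL-ball DRO problem of radius KL(P*,p) around p is exactly the tilted distribution P*, matching the closed form P*(v) = p(v)·exp(g(v)/α)/E_{w∼p}[exp(g(w)/α)]. -/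
/-!
Since `log (P* v / p v) = g v / α - log Z`, every probability vector `q` satisfies
`KL(q, p) = KL(q, P*) + E_q[g] / α - log Z`. Gibbs' inequality `KL(q, P*) ≥ 0`, with equality at
`q = P*`, then gives `E_q[g] ≤ α log Z + α KL(q, p) ≤ α log Z + α KL(P*, p) = E_{P*}[g]`
whenever `KL(q, p) ≤ KL(P*, p)`.
-/

open Real Finset

lemma sub_le_mul_log_div {x y : ℝ} (hx : 0 ≤ x) (hy : 0 < y) : x - y ≤ x * log (x / y) := by
  rcases hx.eq_or_lt with rfl | hx
  · simpa using hy.le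
  · have key := mul_le_mul_of_nonneg_left (one_sub_inv_le_log_of_pos (div_pos hx hy)) hx.le
    rwa [inv_div, mul_sub, mul_one, mul_div_cancel₀ _ hx.ne'] at key

section

variable {V : Type*} [Fintype V]

/-- The junk value `log 0 = 0` realises the convention `0 · log 0 = 0`. -/
noncomputable def discreteKL (q p : V → ℝ) : ℝ := ∑ v, q v * log (q v / p v)

lemma discreteKL_self (q : V → ℝ) : discreteKL q q = 0 :=
  sum_eq_zero fun v _ => by
    rcases eq_or_ne (q v) 0 with h | h
    · rw [h, zero_mul]
    · rw [div_self h, log_one, mul_zero]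

lemma discreteKL_nonneg {q p : V → ℝ} (hq : ∀ v, 0 ≤ q v) (hp : ∀ v, 0 < p v)
    (hsum : ∑ v, p v ≤ ∑ v, q v) : 0 ≤ discreteKL q p :=
  calc 0 ≤ ∑ v, (q v - p v) := by rw [sum_sub_distrib]; linarith
    _ ≤ discreteKL q p := sum_le_sum fun v _ => sub_le_mul_log_div (hq v) (hp v)

lemma discreteKL_eq_discreteKL_add {r p : V → ℝ} (q : V → ℝ) (hr : ∀ v, 0 < r v)
    (hp : ∀ v, 0 < p v) :
    discreteKL q p = discreteKL q r + ∑ v, q v * log (r v / p v) := by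
  rw [discreteKL, discreteKL, ← sum_add_distrib]
  refine sum_congr rfl fun v _ => ?_
  rcases eq_or_ne (q v) 0 with h | h
  · simp [h]
  · rw [← mul_add, ← log_mul (div_ne_zero h (hr v).ne') (div_ne_zero (hr v).ne' (hp v).ne'),
      div_mul_div_cancel₀ (hr v).ne']

noncomputable def tilt (p g : V → ℝ) (α : ℝ) (v : V) : ℝ :=
  p v * exp (g v / α) / ∑ w, p w * exp (g w / α)

variable [Nonempty V] {p : V → ℝ} (g : V → ℝ) (α : ℝ)

lemma partition_pos (hp : ∀ v, 0 < p v) : 0 < ∑ w, p w * exp (g w / α) :=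
  sum_pos (fun v _ => mul_pos (hp v) (exp_pos _)) univ_nonempty

lemma tilt_pos (hp : ∀ v, 0 < p v) (v : V) : 0 < tilt p g α v :=
  div_pos (mul_pos (hp v) (exp_pos _)) (partition_pos g α hp)

lemma sum_tilt (hp : ∀ v, 0 < p v) : ∑ v, tilt p g α v = 1 := by
  simp only [tilt]
  rw [← sum_div, div_self (partition_pos g α hp).ne']

lemma log_tilt_div (hp : ∀ v, 0 < p v) (v : V) :
    log (tilt p g α v / p v) = g v / α - log (∑ w, p w * exp (g w / α)) := by
  rw [tilt, div_right_comm, mul_div_cancel_left₀ _ (hp v).ne',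
    log_div (exp_pos _).ne' (partition_pos g α hp).ne', log_exp]

lemma discreteKL_eq_discreteKL_tilt_add (hp : ∀ v, 0 < p v) {q : V → ℝ} (hq : ∑ v, q v = 1) :
    discreteKL q p = discreteKL q (tilt p g α) + (∑ v, q v * g v) / α
      - log (∑ w, p w * exp (g w / α)) := by
  rw [discreteKL_eq_discreteKL_add q (tilt_pos g α hp) hp]
  simp only [log_tilt_div g α hp, mul_sub, sum_sub_distrib, ← sum_mul, hq, one_mul, sum_div,
    mul_div_assoc]
  ring

end

section

variable {V : Type*} [Fintype V] [Nonempty V] {p : V → ℝ} (g : V → ℝ) {α : ℝ}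

lemma sum_mul_le_log_partition_add_discreteKL (hp : ∀ v, 0 < p v) (hα : 0 < α) {q : V → ℝ}
    (hq0 : ∀ v, 0 ≤ q v) (hq1 : ∑ v, q v = 1) :
    ∑ v, q v * g v ≤ α * log (∑ w, p w * exp (g w / α)) + α * discreteKL q p := by
  have hKL := discreteKL_nonneg hq0 (tilt_pos g α hp) (by rw [sum_tilt g α hp, hq1])
  rw [discreteKL_eq_discreteKL_tilt_add g α hp hq1, mul_sub, mul_add, mul_div_cancel₀ _ hα.ne']
  linarith [mul_nonneg hα.le hKL]

lemma sum_tilt_mul_eq_log_partition_add_discreteKL (hp : ∀ v, 0 < p v) (hα : α ≠ 0) :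
    ∑ v, tilt p g α v * g v
      = α * log (∑ w, p w * exp (g w / α)) + α * discreteKL (tilt p g α) p := by
  rw [discreteKL_eq_discreteKL_tilt_add g α hp (sum_tilt g α hp), discreteKL_self, mul_sub,
    mul_add, mul_div_cancel₀ _ hα]
  ring

end

theorem tilted_distribution_is_worst_case_general
    {V : Type*} [Fintype V] [Nonempty V]
    (p : V → ℝ) (hp_pos : ∀ v, 0 < p v)
    (g : V → ℝ) (α : ℝ) (hα : 0 < α) :
    let Z : ℝ := ∑ w, p w * Real.exp (g w / α)
    let Pstar : V → ℝ := fun v => p v * Real.exp (g v / α) / Z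
    let η : ℝ := ∑ v, Pstar v * Real.log (Pstar v / p v)
    IsGreatest
      {s : ℝ | ∃ q : V → ℝ, (∀ v, 0 ≤ q v) ∧ (∑ v, q v = 1) ∧
        (∑ v, q v * Real.log (q v / p v) ≤ η) ∧ s = ∑ v, q v * g v}
      (∑ v, Pstar v * g v) := by
  intro Z Pstar η
  refine ⟨⟨tilt p g α, fun v => (tilt_pos g α hp_pos v).le, sum_tilt g α hp_pos, le_rfl, rfl⟩, ?_⟩
  rintro _ ⟨q, hq0, hq1, hqη, rfl⟩
  calc ∑ v, q v * g v ≤ α * log Z + α * discreteKL q p :=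
        sum_mul_le_log_partition_add_discreteKL g hp_pos hα hq0 hq1
    _ ≤ α * log Z + α * η := by gcongr; exact hqη
    _ = ∑ v, Pstar v * g v :=
        (sum_tilt_mul_eq_log_partition_add_discreteKL g hp_pos hα.ne').symm

/-- The worst-case distribution of the KL-ball DRO problem of radius
`η = KL(P*,p)` around `p` is exactly the tilted distribution
`P*(v) = p(v)·exp(g(v)/α)/E_{w∼p}[exp(g(w)/α)]`: its expected loss `E_{P*}[g]` is
the greatest element of `{ E_q[g] : q pmf, KL(q,p) ≤ η }`. -/
theorem tilted_distribution_is_worst_case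
    {V : Type*} [Fintype V] [Nonempty V]
    (p : V → ℝ) (hp_pos : ∀ v, 0 < p v) (hp_sum : ∑ v, p v = 1)
    (g : V → ℝ) (α : ℝ) (hα : 0 < α) :
    let Z : ℝ := ∑ w, p w * Real.exp (g w / α)
    let Pstar : V → ℝ := fun v => p v * Real.exp (g v / α) / Z
    let η : ℝ := ∑ v, Pstar v * Real.log (Pstar v / p v)
    IsGreatest
      {s : ℝ | ∃ q : V → ℝ, (∀ v, 0 ≤ q v) ∧ (∑ v, q v = 1) ∧
        (∑ v, q v * Real.log (q v / p v) ≤ η) ∧ s = ∑ v, q v * g v}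
      (∑ v, Pstar v * g v) :=
  tilted_distribution_is_worst_case_general p hp_pos g α hα
end

section
/- Let V be a finite nonempty type, p : V → ℝ a probability mass function with full support, g : V → ℝ, α > 0 and η ∈ ℝ. Then for every β ∈ ℝ, α·η − β + α·( Σ_v p(v)·exp((g(v)+β)/α) − 1 ) ≥ α·η + α·log( Σ_v p(v)·exp(g(v)/α) ), with equality when β = −α·log( Σ_v p(v)·exp(g(v)/α) ). Hence the inner minimization over the Lagrange multiplier β of the DRO dual yields the value α·η + α·log E_{v∼p}[exp(g(v)/α)]. -/
/-- The β-minimization step of the KL-DRO Lagrangian dual: for every `β`,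
`α·η − β + α·(E_p[exp((g+β)/α)] − 1) ≥ α·η + α·log E_p[exp(g/α)]`, with equality
when `β = −α·log E_p[exp(g/α)]`. -/
theorem kl_dro_beta_minimization
    {V : Type*} [Fintype V] [Nonempty V]
    (p : V → ℝ) (hp_pos : ∀ v, 0 < p v) (hp_sum : ∑ v, p v = 1)
    (g : V → ℝ) (α : ℝ) (hα : 0 < α) (η : ℝ) :
    (∀ β : ℝ,
      α * η + α * Real.log (∑ v, p v * Real.exp (g v / α))
        ≤ α * η - β + α * ((∑ v, p v * Real.exp ((g v + β) / α)) - 1)) ∧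
    (α * η - (-(α * Real.log (∑ v, p v * Real.exp (g v / α)))) +
        α * ((∑ v, p v * Real.exp ((g v + -(α * Real.log (∑ v, p v * Real.exp (g v / α)))) / α)) - 1)
      = α * η + α * Real.log (∑ v, p v * Real.exp (g v / α))) := by
  set S : ℝ := ∑ v, p v * Real.exp (g v / α) with hSdef
  have hS : 0 < S :=
    Finset.sum_pos (fun v _ => mul_pos (hp_pos v) (Real.exp_pos _)) Finset.univ_nonempty
  have hfac : ∀ β : ℝ, (∑ v, p v * Real.exp ((g v + β) / α)) = S * Real.exp (β / α) := by
    intro β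
    rw [hSdef, Finset.sum_mul]
    refine Finset.sum_congr rfl fun v _ => ?_
    rw [add_div, Real.exp_add]; ring
  constructor
  · intro β
    rw [hfac β]
    have h := Real.add_one_le_exp (β / α + Real.log S)
    rw [Real.exp_add, Real.exp_log hS] at h
    have h2 : α * (β / α + Real.log S + 1) ≤ α * (Real.exp (β / α) * S) :=
      mul_le_mul_of_nonneg_left h hα.le
    have hβ : α * (β / α) = β := by field_simp
    nlinarith [h2]
  · have he : -(α * Real.log S) / α = -Real.log S := by field_simp
    rw [hfac, he, Real.exp_neg, Real.exp_log hS, mul_inv_cancel₀ hS.ne']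
    ring
end

section
/- Let V be a finite nonempty type, p : V → ℝ a probability mass function with full support, g : V → ℝ and η > 0. Then sSup { Σ_v q(v)·g(v) : q a probability mass function on V with KL(q,p) ≤ η } = ⨅_{α > 0} ( α·η + α·log( Σ_v p(v)·exp(g(v)/α) ) ). That is, the KL-ball distributionally robust maximization over radius η equals the one-dimensional dual infimum over α > 0. -/
/-!
Weak duality is the Donsker–Varadhan inequality `E_q[h] ≤ KL(q,p) + log E_p[exp h]` applied to
`h = g/α`. For the converse, consider the Gibbs tilts `q_β ∝ p·exp(βg)`. At `α = 1/β` the dual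
objective equals `E_{q_β}[g] + (η - KL(q_β,p))/β`, and `β ↦ KL(q_β,p)` is continuous and vanishes
at `β = 0`. Either it reaches `η`, and by the intermediate value theorem some tilt has
`KL(q_β,p) = η` exactly, or it stays below `η`, and every tilt is feasible with excess
`(η - KL(q_β,p))/β ≤ η/β → 0`.
-/

open Real Finset Set InformationTheory

noncomputable section

variable {V : Type*} [Fintype V]

def finKL (q p : V → ℝ) : ℝ := ∑ v, q v * log (q v / p v)

def gibbsTilt (p g : V → ℝ) (β : ℝ) (v : V) : ℝ :=
  p v * exp (β * g v) / ∑ w, p w * exp (β * g w)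

def klBallValues (p g : V → ℝ) (η : ℝ) : Set ℝ :=
  {s | ∃ q : V → ℝ, (∀ v, 0 ≤ q v) ∧ ∑ v, q v = 1 ∧ finKL q p ≤ η ∧ s = ∑ v, q v * g v}

def klDual (p g : V → ℝ) (η α : ℝ) : ℝ :=
  α * η + α * log (∑ v, p v * exp (g v / α))

theorem finKL_self {p : V → ℝ} (hp : ∀ v, p v ≠ 0) : finKL p p = 0 :=
  sum_eq_zero fun v _ => by rw [div_self (hp v), log_one, mul_zero]

theorem finKL_nonneg {q r : V → ℝ} (hq : ∀ v, 0 ≤ q v) (hr : ∀ v, 0 < r v)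
    (hq1 : ∑ v, q v = 1) (hr1 : ∑ v, r v = 1) : 0 ≤ finKL q r := by
  have hterm : ∀ v, r v * klFun (q v / r v)
      = q v * log (q v / r v) + r v - q v := fun v => by
    have := (hr v).ne'
    rw [klFun_apply]; field_simp
  calc 0 ≤ ∑ v, r v * klFun (q v / r v) :=
        sum_nonneg fun v _ => mul_nonneg (hr v).le
          (klFun_nonneg (div_nonneg (hq v) (hr v).le))
    _ = finKL q r := by
        simp only [hterm, sum_sub_distrib, sum_add_distrib, hq1, hr1, finKL]; ring

theorem gibbsTilt_zero {p : V → ℝ} (g : V → ℝ) (hp1 : ∑ v, p v = 1) : gibbsTilt p g 0 = p := by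
  funext v; simp [gibbsTilt, hp1]

section Tilt

variable [Nonempty V] {p : V → ℝ}

theorem sum_mul_exp_pos (hp : ∀ v, 0 < p v) (f : V → ℝ) : 0 < ∑ v, p v * exp (f v) :=
  sum_pos (fun v _ => mul_pos (hp v) (exp_pos _)) univ_nonempty

theorem gibbsTilt_pos (hp : ∀ v, 0 < p v) (g : V → ℝ) (β : ℝ) (v : V) : 0 < gibbsTilt p g β v :=
  div_pos (mul_pos (hp v) (exp_pos _)) (sum_mul_exp_pos hp _)

theorem sum_gibbsTilt (hp : ∀ v, 0 < p v) (g : V → ℝ) (β : ℝ) : ∑ v, gibbsTilt p g β v = 1 := by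
  unfold gibbsTilt
  rw [← sum_div, div_self (sum_mul_exp_pos hp _).ne']

theorem finKL_gibbsTilt (hp : ∀ v, 0 < p v) (g : V → ℝ) (β : ℝ) {q : V → ℝ}
    (hq1 : ∑ v, q v = 1) :
    finKL q (gibbsTilt p g β)
      = finKL q p - β * ∑ v, q v * g v + log (∑ v, p v * exp (β * g v)) := by
  set Z := ∑ v, p v * exp (β * g v)
  have hZ : 0 < Z := sum_mul_exp_pos hp _
  have hterm : ∀ v, q v * log (q v / gibbsTilt p g β v)
      = q v * log (q v / p v) - β * (q v * g v) + q v * log Z := fun v => by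
    rcases eq_or_ne (q v) 0 with hqv | hqv
    · simp [hqv]
    have hsplit : q v / gibbsTilt p g β v = q v / p v * exp (-(β * g v)) * Z := by
      have := (hp v).ne'
      rw [gibbsTilt, exp_neg]; field_simp; rfl
    rw [hsplit, log_mul (mul_ne_zero (div_ne_zero hqv (hp v).ne') (exp_ne_zero _)) hZ.ne',
      log_mul (div_ne_zero hqv (hp v).ne') (exp_ne_zero _), log_exp]
    ring
  simp only [finKL, hterm, sum_add_distrib, sum_sub_distrib, ← sum_mul, ← mul_sum, hq1, one_mul]

theorem finKL_gibbsTilt_self (hp : ∀ v, 0 < p v) (g : V → ℝ) (β : ℝ) :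
    finKL (gibbsTilt p g β) p
      = β * ∑ v, gibbsTilt p g β v * g v - log (∑ v, p v * exp (β * g v)) := by
  have h := finKL_gibbsTilt hp g β (sum_gibbsTilt hp g β)
  rw [finKL_self fun v => (gibbsTilt_pos hp g β v).ne'] at h
  linarith

theorem continuous_finKL_gibbsTilt (hp : ∀ v, 0 < p v) (g : V → ℝ) :
    Continuous fun β => finKL (gibbsTilt p g β) p := by
  have hZ : Continuous fun β : ℝ => ∑ v, p v * exp (β * g v) := by fun_prop
  have hZ0 : ∀ β : ℝ, ∑ v, p v * exp (β * g v) ≠ 0 := fun β => (sum_mul_exp_pos hp _).ne'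
  have htilt : ∀ v, Continuous fun β => gibbsTilt p g β v := fun v =>
    (by fun_prop : Continuous fun β : ℝ => p v * exp (β * g v)).div hZ hZ0
  simp only [finKL_gibbsTilt_self hp]
  exact (continuous_id.mul (continuous_finsetSum _ fun v _ => (htilt v).mul continuous_const)).sub
    (hZ.log hZ0)

theorem sum_mul_le_finKL_add_log_sum_exp (hp : ∀ v, 0 < p v) {q : V → ℝ} (hq : ∀ v, 0 ≤ q v)
    (hq1 : ∑ v, q v = 1) (h : V → ℝ) :
    ∑ v, q v * h v ≤ finKL q p + log (∑ v, p v * exp (h v)) := by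
  have h0 := finKL_nonneg hq (gibbsTilt_pos hp h 1) hq1 (sum_gibbsTilt hp h 1)
  rw [finKL_gibbsTilt hp h 1 hq1] at h0
  simp only [one_mul] at h0
  linarith

theorem sum_mul_le_klDual (hp : ∀ v, 0 < p v) {q : V → ℝ} (hq : ∀ v, 0 ≤ q v)
    (hq1 : ∑ v, q v = 1) (g : V → ℝ) {η : ℝ} (hKL : finKL q p ≤ η) {α : ℝ} (hα : 0 < α) :
    ∑ v, q v * g v ≤ klDual p g η α := by
  have hDV := sum_mul_le_finKL_add_log_sum_exp hp hq hq1 fun v => g v / α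
  have hscale : ∑ v, q v * (g v / α) = (∑ v, q v * g v) / α := by
    rw [sum_div]; exact sum_congr rfl fun v _ => (mul_div_assoc _ _ _).symm
  rw [hscale, div_le_iff₀ hα] at hDV
  calc ∑ v, q v * g v ≤ (finKL q p + log (∑ v, p v * exp (g v / α))) * α := hDV
    _ ≤ (η + log (∑ v, p v * exp (g v / α))) * α :=
        mul_le_mul_of_nonneg_right (by linarith) hα.le
    _ = klDual p g η α := by unfold klDual; ring

theorem klDual_inv_eq (hp : ∀ v, 0 < p v) (g : V → ℝ) (η : ℝ) {β : ℝ} (hβ : 0 < β) :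
    klDual p g η β⁻¹
      = ∑ v, gibbsTilt p g β v * g v + (η - finKL (gibbsTilt p g β) p) / β := by
  have hexp : ∀ v, g v / β⁻¹ = β * g v := fun v => by rw [div_inv_eq_mul, mul_comm]
  simp only [klDual, hexp, finKL_gibbsTilt_self hp]
  field_simp
  ring

theorem exists_gibbsTilt_finKL_le_gap_le (hp : ∀ v, 0 < p v) (hp1 : ∑ v, p v = 1) (g : V → ℝ)
    {η ε : ℝ} (hη : 0 < η) (hε : 0 < ε) :
    ∃ β > 0, finKL (gibbsTilt p g β) p ≤ η ∧ (η - finKL (gibbsTilt p g β) p) / β ≤ ε := by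
  by_cases hreach : ∃ β, 0 ≤ β ∧ η ≤ finKL (gibbsTilt p g β) p
  · obtain ⟨β₀, hβ₀, hη_le⟩ := hreach
    have hKL0 : finKL (gibbsTilt p g 0) p = 0 := by
      rw [gibbsTilt_zero g hp1, finKL_self fun v => (hp v).ne']
    obtain ⟨β, ⟨hβ0, -⟩, hKLβ⟩ := intermediate_value_Icc hβ₀
      (continuous_finKL_gibbsTilt hp g).continuousOn ⟨hKL0.trans_le hη.le, hη_le⟩
    have hβ : β ≠ 0 := by rintro rfl; linarith
    exact ⟨β, lt_of_le_of_ne hβ0 hβ.symm, hKLβ.le, by simp [hKLβ, hε.le]⟩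
  · push Not at hreach
    have hβ : 0 < η / ε := div_pos hη hε
    have hKL_nonneg := finKL_nonneg (fun v => (gibbsTilt_pos hp g (η / ε) v).le) hp
      (sum_gibbsTilt hp g _) hp1
    refine ⟨η / ε, hβ, (hreach _ hβ.le).le, ?_⟩
    calc (η - finKL (gibbsTilt p g (η / ε)) p) / (η / ε) ≤ η / (η / ε) := by gcongr; linarith
      _ = ε := by field_simp

end Tilt

end

/-- Strong duality for KL-ball DRO on a finite space: the robust maximization of
`E_q[g]` over pmfs `q` with `KL(q,p) ≤ η` equals the one-dimensional dual
infimum `⨅_{α>0} ( α·η + α·log E_p[exp(g/α)] )`. -/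
theorem kl_dro_strong_duality
    {V : Type*} [Fintype V] [Nonempty V]
    (p : V → ℝ) (hp_pos : ∀ v, 0 < p v) (hp_sum : ∑ v, p v = 1)
    (g : V → ℝ) (η : ℝ) (hη : 0 < η) :
    sSup {s : ℝ | ∃ q : V → ℝ, (∀ v, 0 ≤ q v) ∧ (∑ v, q v = 1) ∧
        (∑ v, q v * Real.log (q v / p v) ≤ η) ∧ s = ∑ v, q v * g v}
      = ⨅ α : {a : ℝ // 0 < a},
          ((α : ℝ) * η + (α : ℝ) * Real.log (∑ v, p v * Real.exp (g v / (α : ℝ)))) := by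
  change sSup (klBallValues p g η) = ⨅ α : {a : ℝ // 0 < a}, klDual p g η α
  set S := klBallValues p g η
  have hp_mem : ∑ v, p v * g v ∈ S :=
    ⟨p, fun v => (hp_pos v).le, hp_sum, (finKL_self fun v => (hp_pos v).ne').trans_le hη.le, rfl⟩
  have weak : ∀ s ∈ S, ∀ α : {a : ℝ // 0 < a}, s ≤ klDual p g η α := by
    rintro s ⟨q, hq, hq1, hKL, rfl⟩ α
    exact sum_mul_le_klDual hp_pos hq hq1 g hKL α.2
  have hS_bdd : BddAbove S := ⟨_, fun s hs => weak s hs ⟨1, one_pos⟩⟩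
  have hdual_bdd : BddBelow (range fun α : {a : ℝ // 0 < a} => klDual p g η α) := by
    refine ⟨∑ v, p v * g v, ?_⟩
    rintro _ ⟨α, rfl⟩
    exact weak _ hp_mem α
  refine le_antisymm (le_ciInf fun α => csSup_le ⟨_, hp_mem⟩ fun s hs => weak s hs α) ?_
  refine le_of_forall_pos_le_add fun ε hε => ?_
  obtain ⟨β, hβ, hKL, hgap⟩ := exists_gibbsTilt_finKL_le_gap_le hp_pos hp_sum g hη hε
  have htilt_mem : ∑ v, gibbsTilt p g β v * g v ∈ S :=
    ⟨_, fun v => (gibbsTilt_pos hp_pos g β v).le, sum_gibbsTilt hp_pos g β, hKL, rfl⟩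
  calc ⨅ α : {a : ℝ // 0 < a}, klDual p g η α ≤ klDual p g η β⁻¹ :=
        ciInf_le hdual_bdd ⟨β⁻¹, inv_pos.2 hβ⟩
    _ = ∑ v, gibbsTilt p g β v * g v + (η - finKL (gibbsTilt p g β) p) / β :=
        klDual_inv_eq hp_pos g η hβ
    _ ≤ sSup S + ε := add_le_add (le_csSup hS_bdd htilt_mem) hgap
end

section
/- Let d ≥ 1 be a natural number, α > 0, and h : Fin d → ℝ a function such that h(i) − h(j) ≤ 2·√d for all i, j (in particular this holds when every h(i) lies in the interval [1−√d, 1+√d]). Define the softmax weights P*(i) = exp(h(i)/α) / Σ_j exp(h(j)/α). Then for every i, P*(i) ≤ exp(2·√d/α) / ( exp(2·√d/α) + d − 1 ). -/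
/-- Bound on the mass the worst-case (softmax-tilted uniform) DRO distribution
places on a single neighbor: if `h i − h j ≤ 2√d` for all `i, j`, then
`P*(i) = exp(h i/α)/Σ_j exp(h j/α) ≤ exp(2√d/α)/(exp(2√d/α) + d − 1)`. -/
theorem softmax_mass_bound
    (d : ℕ) (hd : 1 ≤ d) (α : ℝ) (hα : 0 < α) (h : Fin d → ℝ)
    (hdiff : ∀ i j, h i - h j ≤ 2 * Real.sqrt d) (i : Fin d) :
    Real.exp (h i / α) / (∑ j, Real.exp (h j / α))
      ≤ Real.exp (2 * Real.sqrt d / α) / (Real.exp (2 * Real.sqrt d / α) + d - 1) := by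
  set E := Real.exp (2 * Real.sqrt d / α) with hE
  set x := Real.exp (h i / α) with hx
  have hd1 : (1 : ℝ) ≤ d := by exact_mod_cast hd
  have hE1 : (1 : ℝ) ≤ E := by
    rw [hE]
    have : (0:ℝ) ≤ 2 * Real.sqrt d / α :=
      div_nonneg (by positivity) hα.le
    simpa using Real.one_le_exp this
  have hS : 0 < ∑ j, Real.exp (h j / α) := by
    apply Finset.sum_pos (fun j _ => Real.exp_pos _)
    exact ⟨i, Finset.mem_univ i⟩
  have hden : 0 < E + d - 1 := by linarith
  rw [div_le_div_iff₀ hS hden]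
  have key : ∀ j, x ≤ E * Real.exp (h j / α) := fun j => by
    rw [hx, hE, ← Real.exp_add]
    apply Real.exp_le_exp.2
    rw [← add_div]
    have := hdiff i j
    gcongr
    linarith
  have hsplit : (∑ j, Real.exp (h j / α))
      = x + ∑ j ∈ Finset.univ.erase i, Real.exp (h j / α) := by
    rw [hx, ← Finset.add_sum_erase _ _ (Finset.mem_univ i)]
  have hlow : (d - 1 : ℝ) * x ≤ E * ∑ j ∈ Finset.univ.erase i, Real.exp (h j / α) := by
    rw [Finset.mul_sum]
    have hcard : (Finset.univ.erase i).card = d - 1 := by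
      simp [Finset.card_erase_of_mem]
    calc (d - 1 : ℝ) * x = ∑ _j ∈ Finset.univ.erase i, x := by
          rw [Finset.sum_const, hcard, nsmul_eq_mul]
          congr 1
          push_cast [Nat.cast_sub hd]
          ring
      _ ≤ _ := Finset.sum_le_sum fun j _ => key j
  have hx0 : 0 < x := Real.exp_pos _
  calc x * (E + d - 1) = E * x + (d - 1) * x := by ring
    _ ≤ E * x + E * ∑ j ∈ Finset.univ.erase i, Real.exp (h j / α) := by linarith
    _ = E * ∑ j, Real.exp (h j / α) := by rw [hsplit]; ring
end
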